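/- arXiv:math/0312112 — 4 statements merged into one kernel-verified Lean document; each statement's English description precedes it below -/
import Mathlib

section
/- For integers $s \ge u \ge t \ge 0$, define $N(s,t,u)=\binom{u-t}{t}\binom{s-u+t}{u-t}+\binom{u-1-t}{t}\binom{s-u+t}{u-1-t}$, and for $d=2m+1$ define $\alpha_i(d,k)=\sum_{j=i-m}^{\lfloor i/2\rfloor}\bigl(2N(k-1,j,i)-N(k-2,j,i)\bigr)$. Then for $0\le i\le m$ and $k\ge d$, $\alpha_i(d,k)=\binom{k-1}{i}+\binom{k-2}{i-1}$. -/
/-!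
Summing `N(s, t, u)` over `t` gives `C(s, u)`. Pascal's rule applied to each binomial factor of
`N` gives the termwise recurrence `N(s,t,u) = N(s-1,t,u) + N(s-2,t-1,u-2) + N(s-2,t,u-1)`, and
`C(s, u)` satisfies the same recurrence `C(s,u) = C(s-1,u) + C(s-2,u-1) + C(s-2,u-2)`; both
vanish for `s < u`, which starts an induction on `u` and, inside it, on `s`.
As `i ≤ m` the summation starts at `j = 0`, so `α_i(d,k) = 2 C(k-1,i) - C(k-2,i)`, which is
`C(k-1,i) + C(k-2,i-1)` by Pascal's rule once more.
-/

/-- Integer binomial coefficient, zero outside the range `0 ≤ b ≤ a`. -/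
def ch (a b : ℤ) : ℤ := if 0 ≤ b ∧ b ≤ a then ((a.toNat).choose b.toNat : ℤ) else 0

/-- `N(s,t,u)` from Dinh's count of new faces of ordinary polytopes. -/
def N (s t u : ℤ) : ℤ :=
  ch (u - t) t * ch (s - u + t) (u - t) + ch (u - 1 - t) t * ch (s - u + t) (u - 1 - t)

lemma ch_eq_zero_of_neg {a b : ℤ} (h : b < 0) : ch a b = 0 := by
  rw [ch, if_neg (by omega)]

lemma ch_eq_zero_of_lt {a b : ℤ} (h : a < b) : ch a b = 0 := by
  rw [ch, if_neg (by omega)]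

lemma ch_natCast (a b : ℕ) : ch a b = a.choose b := by
  rw [ch]
  split_ifs with h
  · simp
  · rw [Nat.choose_eq_zero_of_lt (by omega), Nat.cast_zero]

lemma ch_zero_right {a : ℤ} (h : 0 ≤ a) : ch a 0 = 1 := by
  simp [ch, h]

lemma ch_pascal {n k : ℤ} (h : n ≠ 0 ∨ k ≠ 0) : ch n k = ch (n - 1) k + ch (n - 1) (k - 1) := by
  rcases lt_or_ge k 0 with hk | hk
  · simp only [ch_eq_zero_of_neg hk, ch_eq_zero_of_neg (by omega : k - 1 < 0), add_zero]
  rcases lt_or_ge n k with hnk | hnk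
  · simp only [ch_eq_zero_of_lt hnk, ch_eq_zero_of_lt (by omega : n - 1 < k),
      ch_eq_zero_of_lt (by omega : n - 1 < k - 1), add_zero]
  obtain rfl | hk := eq_or_lt_of_le hk
  · rw [ch_zero_right (by omega), ch_zero_right (by omega), ch_eq_zero_of_neg (by omega), add_zero]
  obtain ⟨a, rfl⟩ : ∃ a : ℕ, n = a + 1 := ⟨(n - 1).toNat, by omega⟩
  obtain ⟨b, rfl⟩ : ∃ b : ℕ, k = b + 1 := ⟨(k - 1).toNat, by omega⟩
  simp only [add_sub_cancel_right]
  rw [← Nat.cast_succ, ← Nat.cast_succ, ch_natCast, ch_natCast, ch_natCast]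
  push_cast [Nat.choose_succ_succ']
  ring

lemma ch_add_two {a : ℤ} (s : ℤ) (ha : 0 ≤ a) :
    ch s (a + 2) = ch (s - 1) (a + 2) + ch (s - 2) (a + 1) + ch (s - 2) a := by
  have h₁ := ch_pascal (n := s) (k := a + 2) (Or.inr (by omega))
  have h₂ := ch_pascal (n := s - 1) (k := a + 1) (Or.inr (by omega))
  rw [show a + 2 - 1 = a + 1 by ring] at h₁
  rw [show a + 1 - 1 = a by ring, show s - 1 - 1 = s - 2 by ring] at h₂
  linarith

lemma N_eq_zero_of_neg {s t u : ℤ} (h : t < 0) : N s t u = 0 := by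
  rw [N, ch_eq_zero_of_neg h, ch_eq_zero_of_neg h, zero_mul, zero_mul, add_zero]

lemma N_eq_zero_of_lt_two_mul {s t u : ℤ} (h : u < 2 * t) : N s t u = 0 := by
  rw [N, ch_eq_zero_of_lt (by omega : u - t < t), ch_eq_zero_of_lt (by omega : u - 1 - t < t),
    zero_mul, zero_mul, add_zero]

lemma N_eq_zero_of_lt {s t u : ℤ} (hs : s < u) (ht : 2 * t ≤ u) : N s t u = 0 := by
  rw [N, ch_eq_zero_of_lt (by omega : s - u + t < u - t), mul_zero, zero_add]
  rcases eq_or_lt_of_le ht with ht | ht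
  · rw [ch_eq_zero_of_lt (by omega : u - 1 - t < t), zero_mul]
  · rw [ch_eq_zero_of_lt (by omega : s - u + t < u - 1 - t), mul_zero]

lemma N_pascal {s t u : ℤ} (ht : 0 ≤ t) (hu : 2 ≤ u) (hs : u ≤ s) :
    N s t u = N (s - 1) t u + N (s - 2) (t - 1) (u - 2) + N (s - 2) t (u - 1) := by
  have h₁ := ch_pascal (n := s - u + t) (k := u - t) (by omega)
  have h₂ := ch_pascal (n := s - u + t) (k := u - t - 1) (by omega)
  have h₃ := ch_pascal (n := u - t) (k := t) (by omega)
  have h₄ := ch_pascal (n := u - t - 1) (k := t) (by omega)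
  simp only [N]
  simp only [show u - 1 - t = u - t - 1 by ring, show u - 2 - (t - 1) = u - t - 1 by ring,
    show u - 2 - 1 - (t - 1) = u - t - 2 by ring, show u - 1 - 1 - t = u - t - 2 by ring,
    show s - 1 - u + t = s - u + t - 1 by ring,
    show s - 2 - (u - 2) + (t - 1) = s - u + t - 1 by ring,
    show s - 2 - (u - 1) + t = s - u + t - 1 by ring, show u - t - 1 - 1 = u - t - 2 by ring]
    at h₁ h₂ h₃ h₄ ⊢
  linear_combination ch (u - t) t * h₁ + ch (u - t - 1) t * h₂
    + ch (s - u + t - 1) (u - t - 1) * h₃ + ch (s - u + t - 1) (u - t - 2) * h₄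

def sumN (s : ℤ) (u : ℕ) : ℤ := ∑ t ∈ Finset.range (u / 2 + 1), N s t u

lemma sum_range_N_eq_sumN (s : ℤ) {u n : ℕ} (hn : u / 2 + 1 ≤ n) :
    ∑ t ∈ Finset.range n, N s t u = sumN s u := by
  refine (Finset.sum_subset (Finset.range_subset_range.2 hn) fun t _ ht => ?_).symm
  simp only [Finset.mem_range, not_lt] at ht
  exact N_eq_zero_of_lt_two_mul (by omega)

lemma sumN_eq_zero_of_lt {s : ℤ} {u : ℕ} (h : s < u) : sumN s u = 0 :=
  Finset.sum_eq_zero fun t ht => N_eq_zero_of_lt h (by simp only [Finset.mem_range] at ht; omega)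

lemma sumN_pascal {s : ℤ} (u : ℕ) (hs : u + 2 ≤ s) :
    sumN s (u + 2) = sumN (s - 1) (u + 2) + sumN (s - 2) u + sumN (s - 2) (u + 1) := by
  have hrange : (u + 2) / 2 + 1 = u / 2 + 1 + 1 := by omega
  have hshift :
      ∑ t ∈ Finset.range ((u + 2) / 2 + 1), N (s - 2) ((t : ℤ) - 1) u = sumN (s - 2) u := by
    rw [hrange, Finset.sum_range_succ', Nat.cast_zero, zero_sub, N_eq_zero_of_neg (by norm_num),
      add_zero, sumN]
    simp only [Nat.cast_succ, add_sub_cancel_right]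
  rw [sumN, sumN, ← sum_range_N_eq_sumN (s - 2) (u := u + 1) (n := (u + 2) / 2 + 1) (by omega),
    ← hshift, ← Finset.sum_add_distrib, ← Finset.sum_add_distrib]
  refine Finset.sum_congr rfl fun t _ => ?_
  push_cast
  rw [N_pascal (by positivity) (by omega) (by omega)]
  ring_nf

lemma sumN_eq_ch (u : ℕ) (s : ℤ) : sumN s u = ch s u := by
  induction u using Nat.twoStepInduction generalizing s with
  | zero => simp [sumN, N, ch_zero_right, ch_eq_zero_of_neg]
  | one =>
    have h := ch_pascal (n := s) (k := 1) (Or.inr one_ne_zero)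
    simp only [sumN, N, Nat.reduceDiv, zero_add, Finset.range_one, Finset.sum_singleton] at h ⊢
    simpa [ch_zero_right] using h.symm
  | more u ih₀ ih₁ =>
    rcases lt_or_ge s (u + 1) with hs | hs
    · rw [sumN_eq_zero_of_lt (by push_cast; omega), ch_eq_zero_of_lt (by push_cast; omega)]
    induction s, hs using Int.leInduction with
    | base => rw [sumN_eq_zero_of_lt (by push_cast; omega), ch_eq_zero_of_lt (by push_cast; omega)]
    | succ s hs ih =>
      rw [sumN_pascal u (by omega), add_sub_cancel_right, ih, ih₀, ih₁]
      push_cast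
      rw [ch_add_two (s + 1) (Nat.cast_nonneg u), add_sub_cancel_right]
      ring

theorem alpha_simplification_general (d m k i : ℕ) (hd5 : 5 ≤ d)
    (hk : d ≤ k) (hi : i ≤ m) :
    ∑ j ∈ Finset.Icc (i - m) (i / 2),
        (2 * N ((k : ℤ) - 1) (j : ℤ) (i : ℤ) - N ((k : ℤ) - 2) (j : ℤ) (i : ℤ))
      = ch ((k : ℤ) - 1) (i : ℤ) + ch ((k : ℤ) - 2) ((i : ℤ) - 1) := by
  have hrange : Finset.Icc (i - m) (i / 2) = Finset.range (i / 2 + 1) := by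
    rw [Nat.sub_eq_zero_of_le hi, Finset.range_eq_Ico, Finset.Ico_add_one_right_eq_Icc]
  have hpascal := ch_pascal (n := (k : ℤ) - 1) (k := i) (Or.inl (by omega))
  rw [show (k : ℤ) - 1 - 1 = k - 2 by ring] at hpascal
  rw [hrange, Finset.sum_sub_distrib, ← Finset.mul_sum, ← sumN, ← sumN, sumN_eq_ch, sumN_eq_ch,
    hpascal]
  ring

/-- For `d = 2m+1 ≥ 5`, `k ≥ d` and `0 ≤ i ≤ m`, the number
`α_i(d,k) = ∑_{j=i-m}^{⌊i/2⌋} (2N(k-1,j,i) - N(k-2,j,i))` of new `i`-faces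
simplifies to `C(k-1,i) + C(k-2,i-1)`. -/
theorem alpha_simplification (d m k i : ℕ) (hd : d = 2 * m + 1) (hd5 : 5 ≤ d)
    (hk : d ≤ k) (hi : i ≤ m) :
    ∑ j ∈ Finset.Icc (i - m) (i / 2),
        (2 * N ((k : ℤ) - 1) (j : ℤ) (i : ℤ) - N ((k : ℤ) - 2) (j : ℤ) (i : ℤ))
      = ch ((k : ℤ) - 1) (i : ℤ) + ch ((k : ℤ) - 2) ((i : ℤ) - 1) :=
  alpha_simplification_general d m k i hd5 hk hi
end

section
/- Let $d\ge 2$ and let $S=\{s_1<s_2<\cdots<s_r\}\subseteq\{0,1,\ldots,d-1\}$ be nonempty, with the convention $s_{r+1}=d$. For $n\ge d$ define $f_S(d,n)=\binom{d+1}{s_1+1,\,s_2-s_1,\,\ldots,\,s_r-s_{r-1},\,d-s_r}\left[1+\frac{n-d}{(d+1)d(d-1)}\sum_{j=1}^{r}(s_j+1)(s_{j+1}-s_j)(s_{j+1}-1)\right]$ (the flag number of the multiplex $M^{d,n}$). Then $f_S(d,n)$ is a rational number that is in fact a nonnegative integer, and for the singleton $S=\{i\}$ it equals $\binom{d+1}{i+1}+(n-d)\binom{d-1}{i}$.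 -/
/-- The elements of `S` in increasing order, as integers. -/
def sortedList (S : Finset ℕ) : List ℤ := (S.sort (· ≤ ·)).map (fun s => (s : ℤ))

/-- The parts `s₁+1, s₂-s₁, …, sᵣ-s_{r-1}, d-sᵣ` of the multinomial coefficient. -/
def multiParts (d : ℕ) (S : Finset ℕ) : List ℤ :=
  List.zipWith (· - ·) (sortedList S ++ [(d : ℤ)]) ((-1) :: sortedList S)

/-- The multinomial coefficient `(d+1)! / ((s₁+1)! (s₂-s₁)! ⋯ (d-sᵣ)!)`. -/
noncomputable def multinom (d : ℕ) (S : Finset ℕ) : ℚ :=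
  (Nat.factorial (d + 1) : ℚ) /
    ((multiParts d S).map (fun a => (Nat.factorial a.toNat : ℚ))).prod

/-- The sum `∑_{j=1}^{r} (s_j+1)(s_{j+1}-s_j)(s_{j+1}-1)` with `s_{r+1} = d`. -/
def pairSum (d : ℕ) (S : Finset ℕ) : ℤ :=
  (List.zipWith (fun a b => (a + 1) * (b - a) * (b - 1))
    (sortedList S) ((sortedList S).tail ++ [(d : ℤ)])).sum

/-- The flag number `f_S(M^{d,n})` of the `d`-dimensional multiplex with `n+1` vertices. -/
noncomputable def multiplexFlag (d n : ℕ) (S : Finset ℕ) : ℚ :=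
  multinom d S *
    (1 + (((n : ℚ) - d) / (((d : ℚ) + 1) * d * ((d : ℚ) - 1))) * (pairSum d S : ℚ))

/-- List multinomial coefficient. -/
def lmult : List ℕ → ℕ
  | [] => 1
  | a :: l => (a + l.sum).choose a * lmult l

def prodF (l : List ℕ) : ℕ := (l.map Nat.factorial).prod

theorem prodF_pos (l : List ℕ) : 0 < prodF l := by
  apply List.prod_pos
  intro x hx
  obtain ⟨y, -, rfl⟩ := List.mem_map.mp hx
  exact Nat.factorial_pos y

theorem lmult_spec : ∀ v : List ℕ, lmult v * prodF v = v.sum.factorial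
  | [] => by simp [lmult, prodF]
  | a :: l => by
    have h := Nat.choose_mul_factorial_mul_factorial (Nat.le_add_right a l.sum)
    rw [Nat.add_sub_cancel_left] at h
    simp only [lmult, prodF, List.map_cons, List.prod_cons, List.sum_cons]
    calc (a + l.sum).choose a * lmult l * (a.factorial * (l.map Nat.factorial).prod)
        = ((a + l.sum).choose a * a.factorial) * (lmult l * prodF l) := by
          simp only [prodF]; ring
      _ = ((a + l.sum).choose a * a.factorial) * l.sum.factorial := by rw [lmult_spec l]
      _ = (a + l.sum).factorial := by rw [← h]

theorem choose_mul (a b : ℕ) :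
    (a + b).choose a * (a.factorial * b.factorial) = (a + b).factorial := by
  have h := Nat.choose_mul_factorial_mul_factorial (Nat.le_add_right a b)
  rw [Nat.add_sub_cancel_left] at h
  rw [← h]; ring

theorem fact2 (x : ℕ) : (x + 2).factorial = (x + 2) * ((x + 1) * x.factorial) := by
  show (x + 1 + 1).factorial = _
  rw [Nat.factorial_succ, Nat.factorial_succ]

theorem fact3 (x : ℕ) : (x + 3).factorial = (x + 3) * ((x + 2) * ((x + 1) * x.factorial)) := by
  show (x + 2 + 1).factorial = _
  rw [Nat.factorial_succ, fact2]

theorem core1 (u v : ℕ) (m : List ℕ) :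
    lmult ((u+2) :: (v+1) :: m) * ((u+2) * (v+1) * (u+1))
      = (u+v+m.sum+3) * ((u+v+m.sum+2) * (u+v+m.sum+1)) * lmult (u :: v :: m) := by
  apply Nat.eq_of_mul_eq_mul_right
    (show 0 < (u+2).factorial * ((v+1).factorial * prodF m) from
      Nat.mul_pos (Nat.factorial_pos _) (Nat.mul_pos (Nat.factorial_pos _) (prodF_pos m)))
  have e1 := lmult_spec ((u+2) :: (v+1) :: m)
  simp only [prodF, List.map_cons, List.prod_cons, List.sum_cons] at e1
  rw [show u+2+(v+1+m.sum) = u+v+m.sum+3 from by omega] at e1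
  have e2 := lmult_spec (u :: v :: m)
  simp only [prodF, List.map_cons, List.prod_cons, List.sum_cons] at e2
  rw [show u+(v+m.sum) = u+v+m.sum from by omega] at e2
  simp only [prodF]
  calc lmult ((u+2) :: (v+1) :: m) * ((u+2) * (v+1) * (u+1))
        * ((u+2).factorial * ((v+1).factorial * (m.map Nat.factorial).prod))
      = ((u+2) * (v+1) * (u+1)) *
        (lmult ((u+2) :: (v+1) :: m) *
          ((u+2).factorial * ((v+1).factorial * (m.map Nat.factorial).prod))) := by ring
    _ = ((u+2) * (v+1) * (u+1)) * (u+v+m.sum+3).factorial := by rw [e1]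
    _ = ((u+2) * (v+1) * (u+1)) *
        ((u+v+m.sum+3) * ((u+v+m.sum+2) * ((u+v+m.sum+1) * (u+v+m.sum).factorial))) := by
        rw [fact3]
    _ = ((u+v+m.sum+3) * ((u+v+m.sum+2) * (u+v+m.sum+1))) * ((u+2) * ((u+1) * (v+1))) *
        (lmult (u :: v :: m) * (u.factorial * (v.factorial * (m.map Nat.factorial).prod))) := by
        rw [e2]; ring
    _ = (u+v+m.sum+3) * ((u+v+m.sum+2) * (u+v+m.sum+1)) * lmult (u :: v :: m)
        * ((u+2).factorial * ((v+1).factorial * (m.map Nat.factorial).prod)) := by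
        rw [fact2 u, Nat.factorial_succ v]; ring

theorem core2 (u v : ℕ) (m : List ℕ) :
    lmult ((u+1) :: (v+2) :: m) * ((u+1) * (v+2) * (v+1))
      = (u+v+m.sum+3) * ((u+v+m.sum+2) * (u+v+m.sum+1)) * lmult (u :: v :: m) := by
  apply Nat.eq_of_mul_eq_mul_right
    (show 0 < (u+1).factorial * ((v+2).factorial * prodF m) from
      Nat.mul_pos (Nat.factorial_pos _) (Nat.mul_pos (Nat.factorial_pos _) (prodF_pos m)))
  have e1 := lmult_spec ((u+1) :: (v+2) :: m)
  simp only [prodF, List.map_cons, List.prod_cons, List.sum_cons] at e1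
  rw [show u+1+(v+2+m.sum) = u+v+m.sum+3 from by omega] at e1
  have e2 := lmult_spec (u :: v :: m)
  simp only [prodF, List.map_cons, List.prod_cons, List.sum_cons] at e2
  rw [show u+(v+m.sum) = u+v+m.sum from by omega] at e2
  simp only [prodF]
  calc lmult ((u+1) :: (v+2) :: m) * ((u+1) * (v+2) * (v+1))
        * ((u+1).factorial * ((v+2).factorial * (m.map Nat.factorial).prod))
      = ((u+1) * (v+2) * (v+1)) *
        (lmult ((u+1) :: (v+2) :: m) *
          ((u+1).factorial * ((v+2).factorial * (m.map Nat.factorial).prod))) := by ring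
    _ = ((u+1) * (v+2) * (v+1)) * (u+v+m.sum+3).factorial := by rw [e1]
    _ = ((u+1) * (v+2) * (v+1)) *
        ((u+v+m.sum+3) * ((u+v+m.sum+2) * ((u+v+m.sum+1) * (u+v+m.sum).factorial))) := by
        rw [fact3]
    _ = ((u+v+m.sum+3) * ((u+v+m.sum+2) * (u+v+m.sum+1))) * ((v+2) * ((v+1) * (u+1))) *
        (lmult (u :: v :: m) * (u.factorial * (v.factorial * (m.map Nat.factorial).prod))) := by
        rw [e2]; ring
    _ = (u+v+m.sum+3) * ((u+v+m.sum+2) * (u+v+m.sum+1)) * lmult (u :: v :: m)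
        * ((u+1).factorial * ((v+2).factorial * (m.map Nat.factorial).prod)) := by
        rw [fact2 v, Nat.factorial_succ u]; ring

theorem A1 (d s q : ℕ) (m : List ℕ) (hq : 1 ≤ q) (h : s + 1 + q + m.sum = d + 1) :
    lmult ((s+1) :: q :: m) * ((s+1) * q * s)
      = (d+1) * d * (d-1) * (if 1 ≤ s then lmult ((s-1) :: (q-1) :: m) else 0) := by
  rcases Nat.lt_or_ge s 1 with hs | hs
  · interval_cases s; simp
  rw [if_pos hs]
  obtain ⟨a, rfl⟩ : ∃ a, s = a + 1 := ⟨s - 1, by omega⟩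
  obtain ⟨b, rfl⟩ : ∃ b, q = b + 1 := ⟨q - 1, by omega⟩
  obtain rfl : d = a + b + m.sum + 2 := by omega
  simp only [show a+1+1 = a+2 from rfl, show a+1-1 = a from by omega,
    show b+1-1 = b from by omega, show a+b+m.sum+2-1 = a+b+m.sum+1 from by omega,
    show a+b+m.sum+2+1 = a+b+m.sum+3 from rfl]
  rw [core1 a b m]; ring

theorem A2 (d s q : ℕ) (m : List ℕ) (h : s + 1 + q + m.sum = d + 1) :
    lmult ((s+1) :: q :: m) * ((s+1) * q * (q-1))
      = (d+1) * d * (d-1) * (if 2 ≤ q then lmult (s :: (q-2) :: m) else 0) := by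
  rcases Nat.lt_or_ge q 2 with hq | hq
  · rw [if_neg (by omega), show q - 1 = 0 from by omega]; simp
  rw [if_pos hq]
  obtain ⟨b, rfl⟩ : ∃ b, q = b + 2 := ⟨q - 2, by omega⟩
  obtain rfl : d = s + b + m.sum + 2 := by omega
  simp only [show b+2-1 = b+1 from by omega, show b+2-2 = b from by omega,
    show s+b+m.sum+2-1 = s+b+m.sum+1 from by omega,
    show s+b+m.sum+2+1 = s+b+m.sum+3 from rfl]
  rw [core2 s b m]; ring
theorem B (s q : ℕ) (m : List ℕ) :
    lmult ((s+1) :: q :: m) = (s+q+1).choose (s+1) * lmult ((s+q+1) :: m) := by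
  have h1 : (s+1+(q+m.sum)).choose (s+1) * (q+m.sum).choose q
      = (s+q+1).choose (s+1) * (s+q+1+m.sum).choose (s+q+1) := by
    apply Nat.eq_of_mul_eq_mul_right
      (show 0 < (s+1).factorial * (q.factorial * m.sum.factorial) from
        Nat.mul_pos (Nat.factorial_pos _) (Nat.mul_pos (Nat.factorial_pos _) (Nat.factorial_pos _)))
    calc ((s+1+(q+m.sum)).choose (s+1) * (q+m.sum).choose q)
          * ((s+1).factorial * (q.factorial * m.sum.factorial))
        = ((s+1+(q+m.sum)).choose (s+1) * ((s+1).factorial * (q+m.sum).choose q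
            * (q.factorial * m.sum.factorial))) := by ring
      _ = (s+1+(q+m.sum)).choose (s+1) * ((s+1).factorial * (q+m.sum).factorial) := by
          rw [mul_assoc ((s+1).factorial), choose_mul q m.sum]
      _ = (s+1+(q+m.sum)).factorial := by
          rw [← choose_mul (s+1) (q+m.sum)]
      _ = (s+q+1+m.sum).factorial := by rw [show s+1+(q+m.sum) = s+q+1+m.sum from by omega]
      _ = (s+q+1+m.sum).choose (s+q+1) * ((s+q+1).factorial * m.sum.factorial) := by
          rw [choose_mul (s+q+1) m.sum]
      _ = (s+q+1+m.sum).choose (s+q+1) * ((s+q+1).choose (s+1)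
            * ((s+1).factorial * q.factorial) * m.sum.factorial) := by
          rw [show s+q+1 = s+1+q from by omega, choose_mul (s+1) q]
      _ = ((s+q+1).choose (s+1) * (s+q+1+m.sum).choose (s+q+1))
            * ((s+1).factorial * (q.factorial * m.sum.factorial)) := by ring
  simp only [lmult, List.sum_cons]
  calc (s+1+(q+m.sum)).choose (s+1) * ((q+m.sum).choose q * lmult m)
      = ((s+1+(q+m.sum)).choose (s+1) * (q+m.sum).choose q) * lmult m := by ring
    _ = ((s+q+1).choose (s+1) * (s+q+1+m.sum).choose (s+q+1)) * lmult m := by rw [h1]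
    _ = (s+q+1).choose (s+1) * ((s+q+1+m.sum).choose (s+q+1) * lmult m) := by ring

/-- Differences `x₁-s, x₂-x₁, …, d-x_r`. -/
def gaps (d : ℕ) : ℕ → List ℕ → List ℕ
  | s, [] => [d - s]
  | s, x :: l => (x - s) :: gaps d x l

def pairS (d : ℕ) : ℕ → List ℕ → ℕ
  | s, [] => (s+1) * (d - s) * (d - 1)
  | s, x :: l => (s+1) * (x - s) * (x - 1) + pairS d x l

def U (d : ℕ) : ℕ → List ℕ → ℕ
  | s, [] => (if 1 ≤ s then lmult ((s-1) :: (d-s-1) :: []) else 0)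
      + (if 2 ≤ d - s then lmult (s :: (d-s-2) :: []) else 0)
  | s, x :: l => (if 1 ≤ s then lmult ((s-1) :: (x-s-1) :: gaps d x l) else 0)
      + (if 2 ≤ x - s then lmult (s :: (x-s-2) :: gaps d x l) else 0)
      + (x+1).choose (s+1) * U d x l

theorem gaps_sum (d : ℕ) : ∀ (l : List ℕ) (s : ℕ), List.Pairwise (· < ·) (s :: l) →
    (∀ x ∈ s :: l, x < d) → (gaps d s l).sum = d - s
  | [], s, _, hm => by simp [gaps]
  | x :: l, s, hs, hm => by
    have h1 : s < x := (List.pairwise_cons.mp hs).1 x (by simp)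
    have hxd : x < d := hm x (by simp)
    have ih := gaps_sum d l x (List.pairwise_cons.mp hs).2
      (fun y hy => hm y (List.mem_cons_of_mem _ hy))
    simp only [gaps, List.sum_cons, ih]
    omega

theorem key (d : ℕ) : ∀ (l : List ℕ) (s : ℕ), List.Pairwise (· < ·) (s :: l) →
    (∀ x ∈ s :: l, x < d) →
    lmult ((s+1) :: gaps d s l) * pairS d s l = (d+1) * d * (d-1) * U d s l
  | [], s, hsort, hmem => by
    have hs : s < d := hmem s (by simp)
    have hA1 := A1 d s (d - s) [] (by omega) (by simp; omega)
    have hA2 := A2 d s (d - s) [] (by simp; omega)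
    simp only [gaps, pairS, U]
    have hx1 : (s+1) * (d-s) * (d-1)
        = (s+1) * (d-s) * s + (s+1) * (d-s) * (d-s-1) := by
      rw [show (s+1)*(d-s)*s + (s+1)*(d-s)*(d-s-1) = (s+1)*(d-s)*(s + (d-s-1)) from by ring,
        show s + (d-s-1) = d - 1 from by omega]
    rw [hx1, mul_add, hA1, hA2, mul_add]
  | x :: l, s, hsort, hmem => by
    obtain ⟨hsx, hsort'⟩ := List.pairwise_cons.mp hsort
    have hx : s < x := hsx x (by simp)
    have hmem' : ∀ y ∈ x :: l, y < d := fun y hy => hmem y (List.mem_cons_of_mem _ hy)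
    have hxd : x < d := hmem' x (by simp)
    have ih := key d l x hsort' hmem'
    have hGsum : (gaps d x l).sum = d - x := gaps_sum d l x hsort' hmem'
    have hsum : s + 1 + (x - s) + (gaps d x l).sum = d + 1 := by rw [hGsum]; omega
    have hA1 := A1 d s (x - s) (gaps d x l) (by omega) hsum
    have hA2 := A2 d s (x - s) (gaps d x l) hsum
    have hB := B s (x - s) (gaps d x l)
    rw [show s + (x - s) + 1 = x + 1 from by omega] at hB
    simp only [gaps, pairS, U]
    have expand : lmult ((s+1) :: (x-s) :: gaps d x l) * ((s+1) * (x-s) * (x-1) + pairS d x l)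
        = lmult ((s+1) :: (x-s) :: gaps d x l) * ((s+1) * (x-s) * s)
          + lmult ((s+1) :: (x-s) :: gaps d x l) * ((s+1) * (x-s) * (x-s-1))
          + (x+1).choose (s+1) * (lmult ((x+1) :: gaps d x l) * pairS d x l) := by
      rw [show (s+1) * (x-s) * (x-1)
          = (s+1) * (x-s) * s + (s+1) * (x-s) * (x-s-1) from by
        rw [show (s+1)*(x-s)*s + (s+1)*(x-s)*(x-s-1) = (s+1)*(x-s)*(s + (x-s-1)) from by ring,
          show s + (x-s-1) = x - 1 from by omega], hB]
      ring
    rw [expand, hA1, hA2, ih]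
    ring
theorem lmult_pair (a b : ℕ) : lmult [a, b] = (a + b).choose a := by
  simp [lmult]

theorem U_nil (d i : ℕ) (hd : 2 ≤ d) (hi : i < d) : U d i [] = (d - 1).choose i := by
  simp only [U]
  rcases Nat.eq_zero_or_pos i with rfl | h1
  · rw [if_neg (by omega), if_pos (by omega), lmult_pair]
    simp
  by_cases h2 : 2 ≤ d - i
  · rw [if_pos (show 1 ≤ i from h1), if_pos h2, lmult_pair, lmult_pair]
    obtain ⟨a, rfl⟩ : ∃ a, i = a + 1 := ⟨i - 1, by omega⟩
    obtain ⟨e, rfl⟩ : ∃ e, d = e + 3 := ⟨d - 3, by omega⟩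
    rw [show a+1-1+(e+3-(a+1)-1) = e+1 from by omega, show a+1-1 = a from by omega,
      show a+1+(e+3-(a+1)-2) = e+1 from by omega, show e+3-1 = e+2 from by omega]
    exact (Nat.choose_succ_succ (e+1) a).symm
  · rw [if_pos (show 1 ≤ i from h1), if_neg h2, lmult_pair]
    rw [show i-1+(d-i-1) = d-2 from by omega, show i-1 = d-2 from by omega,
      show i = d-1 from by omega]
    simp [Nat.choose_self]

theorem zip_gaps (d : ℕ) : ∀ (l : List ℕ) (s : ℕ), List.Pairwise (· < ·) (s :: l) →
    (∀ x ∈ s :: l, x < d) →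
    List.zipWith (· - ·) ((l.map (fun k : ℕ => (k : ℤ))) ++ [(d : ℤ)])
        ((s : ℤ) :: l.map (fun k : ℕ => (k : ℤ)))
      = (gaps d s l).map (fun k : ℕ => (k : ℤ))
  | [], s, _, hm => by
    have hs : s < d := hm s (by simp)
    simp only [List.map_nil, List.nil_append, List.zipWith_cons_cons, List.zipWith_nil_right,
      gaps, List.map_cons]
    rw [Nat.cast_sub (le_of_lt hs)]
  | x :: l, s, hs, hm => by
    have hsx : s < x := (List.pairwise_cons.mp hs).1 x (by simp)
    have ih := zip_gaps d l x (List.pairwise_cons.mp hs).2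
      (fun y hy => hm y (List.mem_cons_of_mem _ hy))
    simp only [List.map_cons, List.cons_append, List.zipWith_cons_cons, gaps]
    rw [ih]
    congr 1
    omega

theorem pairZ (d : ℕ) : ∀ (l : List ℕ) (s : ℕ), List.Pairwise (· < ·) (s :: l) →
    (∀ x ∈ s :: l, x < d) →
    (List.zipWith (fun a b : ℤ => (a + 1) * (b - a) * (b - 1))
        ((s : ℤ) :: l.map (fun k : ℕ => (k : ℤ))) ((l.map (fun k : ℕ => (k : ℤ))) ++ [(d : ℤ)])).sum
      = (pairS d s l : ℤ)
  | [], s, _, hm => by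
    have hs : s < d := hm s (by simp)
    simp only [List.map_nil, List.nil_append, List.zipWith_cons_cons, List.zipWith_nil_left,
      List.sum_cons, List.sum_nil, pairS, add_zero]
    push_cast [Nat.cast_sub (show s ≤ d from by omega), Nat.cast_sub (show 1 ≤ d from by omega)]
    ring
  | x :: l, s, hs, hm => by
    have hsx : s < x := (List.pairwise_cons.mp hs).1 x (by simp)
    have ih := pairZ d l x (List.pairwise_cons.mp hs).2
      (fun y hy => hm y (List.mem_cons_of_mem _ hy))
    simp only [List.map_cons, List.cons_append, List.zipWith_cons_cons, List.sum_cons, pairS]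
    rw [ih]
    push_cast [Nat.cast_sub (show s ≤ x from by omega), Nat.cast_sub (show 1 ≤ x from by omega)]
    ring
theorem flatMap_cast (l : List ℕ) :
    (l.flatMap fun (a : ℕ) => [(a : ℤ)]) = List.map (fun k : ℕ => (k : ℤ)) l := by
  induction l with
  | nil => rfl
  | cons a t ih => simp [List.flatMap_cons, ih]

theorem flag_formula (d n : ℕ) (hd : 2 ≤ d) (hn : d ≤ n) (S : Finset ℕ)
    (hSd : S ⊆ Finset.range d) (s : ℕ) (l : List ℕ) (hsl : S.sort (· ≤ ·) = s :: l) :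
    multiplexFlag d n S = ((lmult ((s+1) :: gaps d s l) + (n - d) * U d s l : ℕ) : ℚ) := by
  have hsort : List.Pairwise (· < ·) (s :: l) := by rw [← hsl]; exact (Finset.sortedLT_sort S).pairwise
  have hmem : ∀ x ∈ s :: l, x < d := by
    intro x hx
    have hxS : x ∈ S := by
      rw [← Finset.mem_sort (α := ℕ) (· ≤ ·), hsl]; exact hx
    simpa using hSd hxS
  have hs : s < d := hmem s (by simp)
  have hSL : sortedList S = (s : ℤ) :: l.map (fun k : ℕ => (k : ℤ)) := by
    rw [sortedList, hsl]
    simp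
    exact flatMap_cast l
  have hmp : multiParts d S = ((s+1) :: gaps d s l).map (fun k : ℕ => (k : ℤ)) := by
    rw [multiParts, hSL]
    simp only [List.map_cons, List.cons_append, List.zipWith_cons_cons]
    rw [zip_gaps d l s hsort hmem]
    congr 1
  have hsum : ((s+1) :: gaps d s l).sum = d + 1 := by
    simp only [List.sum_cons, gaps_sum d l s hsort hmem]; omega
  have hPF : ((multiParts d S).map (fun a => (Nat.factorial a.toNat : ℚ))).prod
      = (prodF ((s+1) :: gaps d s l) : ℚ) := by
    rw [hmp, List.map_map]
    have hcomp : ((fun a : ℤ => (Nat.factorial a.toNat : ℚ)) ∘ fun k : ℕ => (k : ℤ))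
        = fun k : ℕ => (Nat.factorial k : ℚ) := by
      funext k; simp
    rw [hcomp, prodF, Nat.cast_list_prod, List.map_map]
    rfl
  have hspec := lmult_spec ((s+1) :: gaps d s l)
  rw [hsum] at hspec
  have hne : (prodF ((s+1) :: gaps d s l) : ℚ) ≠ 0 := by
    exact_mod_cast (prodF_pos _).ne'
  have hmn : multinom d S = (lmult ((s+1) :: gaps d s l) : ℚ) := by
    unfold multinom
    rw [hPF, div_eq_iff hne]
    exact_mod_cast hspec.symm
  have hpz : (pairSum d S : ℚ) = ((pairS d s l : ℕ) : ℚ) := by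
    have h0 : pairSum d S = (pairS d s l : ℤ) := by
      rw [pairSum, hSL]
      simp only [List.tail_cons]
      exact pairZ d l s hsort hmem
    rw [h0]
    push_cast
    rfl
  have hkey := key d l s hsort hmem
  have hkeyQ : (lmult ((s+1) :: gaps d s l) : ℚ) * ((pairS d s l : ℕ) : ℚ)
      = (((d:ℚ)+1) * d * ((d:ℚ)-1)) * (U d s l : ℚ) := by
    have h1 := congrArg (fun k : ℕ => (k : ℚ)) hkey
    push_cast [Nat.cast_sub (show 1 ≤ d from by omega)] at h1
    linear_combination h1
  have hD : (((d:ℚ)+1) * d * ((d:ℚ)-1)) ≠ 0 := by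
    have h2 : (2:ℚ) ≤ (d:ℚ) := by exact_mod_cast hd
    have : (0:ℚ) < ((d:ℚ)+1) * d * ((d:ℚ)-1) :=
      mul_pos (mul_pos (by linarith) (by linarith)) (by linarith)
    exact this.ne'
  unfold multiplexFlag
  rw [hmn, hpz]
  push_cast [Nat.cast_sub hn]
  have hd1 : (d:ℚ) - 1 ≠ 0 := by
    have h2 : (2:ℚ) ≤ (d:ℚ) := by exact_mod_cast hd
    linarith
  field_simp
  linear_combination ((n:ℚ) - d) * hkeyQ

/-- The flag number formula for the multiplex `M^{d,n}` yields a nonnegative integer for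
every nonempty `S ⊆ {0,…,d-1}`, and for a singleton `S = {i}` it reduces to the face
number `C(d+1, i+1) + (n-d) C(d-1, i)`. -/
theorem multiplexFlag_integral_and_singleton (d n : ℕ) (hd : 2 ≤ d) (hn : d ≤ n)
    (S : Finset ℕ) (hS : S.Nonempty) (hSd : S ⊆ Finset.range d) :
    (∃ z : ℕ, multiplexFlag d n S = z) ∧
    (∀ i < d, multiplexFlag d n {i}
        = (Nat.choose (d + 1) (i + 1) : ℚ) + ((n : ℚ) - d) * (Nat.choose (d - 1) i : ℚ)) := by
  constructor
  · obtain ⟨s, l, hsl⟩ : ∃ s l, S.sort (· ≤ ·) = s :: l := by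
      cases h : S.sort (· ≤ ·) with
      | nil =>
        exfalso
        have hlen := Finset.length_sort (α := ℕ) (· ≤ ·) (s := S)
        rw [h] at hlen
        simp at hlen
        exact hS.ne_empty (Finset.card_eq_zero.mp hlen.symm)
      | cons a t => exact ⟨a, t, rfl⟩
    exact ⟨_, flag_formula d n hd hn S hSd s l hsl⟩
  · intro i hi
    have hsub : ({i} : Finset ℕ) ⊆ Finset.range d := by
      simp [Finset.singleton_subset_iff, Finset.mem_range, hi]
    have hform := flag_formula d n hd hn {i} hsub i [] (Finset.sort_singleton (· ≤ ·) i)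
    rw [hform]
    have h1 : lmult ((i+1) :: gaps d i []) = (d+1).choose (i+1) := by
      show lmult [i+1, d-i] = _
      rw [lmult_pair, show i+1+(d-i) = d+1 from by omega]
    rw [h1, U_nil d i hd hi]
    push_cast [Nat.cast_sub hn]
    ring
end

section
/- Let $d\ge 2$ and let $P$ be a multiplicial $d$-polytope (every proper face is a multiplex). Fix a nonempty $S=\{s_1<\cdots<s_r\}\subseteq\{0,\ldots,d-1\}$ with maximum $t=s_r$ and $r\ge 2$. Then $f_S(P)=a\,f_t(P)+b\,f_{0,t}(P)$, where $a=\binom{t+1}{s_1+1,s_2-s_1,\ldots,s_r-s_{r-1}}\left[1-\frac{1}{t(t-1)}\sum_{j=1}^{r-1}(s_j+1)(s_{j+1}-s_j)(s_{j+1}-1)\right]$ and $b=\binom{t+1}{s_1+1,\ldots,s_r-s_{r-1}}\cdot\frac{1}{(t+1)t(t-1)}\sum_{j=1}^{r-1}(s_j+1)(s_{j+1}-s_j)(s_{j+1}-1)$. -/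
structure GradedLattice (d : ℕ) where
  carrier : Type
  [fin : Fintype carrier]
  [po : PartialOrder carrier]
  [bo : BoundedOrder carrier]
  rk : carrier → ℕ
  rk_bot : rk ⊥ = 0
  rk_top : rk ⊤ = d + 1
  rk_strictMono : ∀ x y : carrier, x < y → rk x < rk y
  rk_cover : ∀ x y : carrier, x ⋖ y → rk y = rk x + 1

attribute [instance] GradedLattice.fin GradedLattice.po GradedLattice.bo

noncomputable def flagNum {d : ℕ} (P : GradedLattice d) (S : Finset ℕ) : ℕ :=
  Nat.card {c : Finset P.carrier //
    IsChain (· ≤ ·) (c : Set P.carrier) ∧ (∀ x ∈ c, x ≠ ⊥ ∧ x ≠ ⊤) ∧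
    c.image P.rk = S.image (· + 1)}

/-- Flag numbers of the part of `P` weakly below a face `F` (excluding `⊥`):
the number of chains of faces `≤ F` whose set of dimensions is `S`. -/
noncomputable def flagBelow {d : ℕ} (P : GradedLattice d) (F : P.carrier) (S : Finset ℕ) : ℕ :=
  Nat.card {c : Finset P.carrier //
    IsChain (· ≤ ·) (c : Set P.carrier) ∧ (∀ x ∈ c, x ≤ F ∧ x ≠ ⊥) ∧
    c.image P.rk = S.image (· + 1)}

/-- `P` is multiplicial: every proper face `F` (of dimension `rk F - 1`, with
`flagBelow P F {0}` vertices) has the flag numbers of a multiplex. -/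
def Multiplicial {d : ℕ} (P : GradedLattice d) : Prop :=
  ∀ F : P.carrier, F ≠ ⊥ → F ≠ ⊤ → ∀ S ⊆ Finset.range (P.rk F - 1),
    (flagBelow P F S : ℚ) = multiplexFlag (P.rk F - 1) (flagBelow P F {0} - 1) S

open Classical in
/-- `P` is Eulerian: every nontrivial interval has equally many elements of even
and of odd rank. -/
def Eulerian {d : ℕ} (P : GradedLattice d) : Prop :=
  ∀ x y : P.carrier, x < y →
    ∑ z : P.carrier, (if x ≤ z ∧ z ≤ y then (-1 : ℤ) ^ P.rk z else 0) = 0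

open Finset in
lemma chain_rk_inj {d : ℕ} (P : GradedLattice d) {c : Finset P.carrier}
    (hc : IsChain (· ≤ ·) (c : Set P.carrier))
    {x y : P.carrier} (hx : x ∈ c) (hy : y ∈ c) (h : P.rk x = P.rk y) : x = y := by
  by_contra hne
  rcases hc (Finset.mem_coe.2 hx) (Finset.mem_coe.2 hy) hne with h' | h'
  · exact absurd h (P.rk_strictMono x y (h'.lt_of_ne hne)).ne
  · exact absurd h (P.rk_strictMono y x (h'.lt_of_ne (Ne.symm hne))).ne'

open Finset in
lemma flagBelow_empty {d : ℕ} (P : GradedLattice d) (F : P.carrier) :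
    flagBelow P F ∅ = 1 := by
  classical
  rw [flagBelow]
  haveI : Unique {c : Finset P.carrier //
      IsChain (· ≤ ·) (c : Set P.carrier) ∧ (∀ x ∈ c, x ≤ F ∧ x ≠ ⊥) ∧
      c.image P.rk = (∅ : Finset ℕ).image (· + 1)} := by
    refine ⟨⟨⟨∅, ?_, ?_, ?_⟩⟩, ?_⟩
    · simp
    · simp
    · simp
    · rintro ⟨c, hc1, hc2, hc3⟩
      have : c = ∅ := by
        simpa using hc3
      exact Subtype.ext this
  exact Nat.card_unique

open Finset in
lemma one_le_flagBelow_zero {d : ℕ} (P : GradedLattice d) (F : P.carrier) (hF : F ≠ ⊥) :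
    1 ≤ flagBelow P F {0} := by
  classical
  obtain ⟨m, hm, hmin⟩ := Finset.exists_minimal (s :=
    (Finset.univ.filter fun x : P.carrier => ⊥ < x ∧ x ≤ F))
    ⟨F, by simp [bot_lt_iff_ne_bot.2 hF]⟩
  simp only [Finset.mem_filter, Finset.mem_univ, true_and] at hm
  have hcov : (⊥ : P.carrier) ⋖ m := by
    refine ⟨hm.1, fun z h1 h2 => ?_⟩
    exact h2.not_ge (hmin (y := z) (by simp [h1, h2.le.trans hm.2]) h2.le)
  have hrk : P.rk m = 1 := by rw [P.rk_cover ⊥ m hcov, P.rk_bot]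
  have hne : Nonempty {c : Finset P.carrier //
      IsChain (· ≤ ·) (c : Set P.carrier) ∧ (∀ x ∈ c, x ≤ F ∧ x ≠ ⊥) ∧
      c.image P.rk = ({0} : Finset ℕ).image (· + 1)} := by
    refine ⟨⟨{m}, ?_, ?_, ?_⟩⟩
    · simp
    · intro x hx
      rw [Finset.mem_singleton] at hx
      subst hx
      exact ⟨hm.2, hm.1.ne'⟩
    · simp [hrk]
  rw [flagBelow]
  exact Nat.card_pos

open Finset in
lemma flag_split {d : ℕ} (P : GradedLattice d) (S : Finset ℕ) (t : ℕ) (ht : t ∈ S)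
    (htmax : ∀ s ∈ S, s ≤ t) (htd : t < d) :
    flagNum P S = ∑ F : {F : P.carrier // P.rk F = t + 1}, flagBelow P F.1 (S.erase t) := by
  classical
  -- basic facts about elements of "below" chains
  have hrkb : ∀ (F : P.carrier) (c' : Finset P.carrier),
      c'.image P.rk = (S.erase t).image (· + 1) → ∀ x ∈ c', 1 ≤ P.rk x ∧ P.rk x ≤ t := by
    intro F c' himg x hx
    have : P.rk x ∈ (S.erase t).image (· + 1) := himg ▸ Finset.mem_image_of_mem _ hx
    obtain ⟨s, hs, hsx⟩ := Finset.mem_image.1 this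
    have h1 := Finset.mem_erase.1 hs
    have h2 := htmax s h1.2
    omega
  -- the forward map
  have hbotrk : ∀ x : P.carrier, x = ⊥ → P.rk x = 0 := fun x hx => hx ▸ P.rk_bot
  have htoprk : ∀ x : P.carrier, x = ⊤ → P.rk x = d + 1 := fun x hx => hx ▸ P.rk_top
  let g : (Σ F : {F : P.carrier // P.rk F = t + 1},
      {c' : Finset P.carrier // IsChain (· ≤ ·) (c' : Set P.carrier) ∧
        (∀ x ∈ c', x ≤ F.1 ∧ x ≠ ⊥) ∧ c'.image P.rk = (S.erase t).image (· + 1)}) →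
      {c : Finset P.carrier // IsChain (· ≤ ·) (c : Set P.carrier) ∧
        (∀ x ∈ c, x ≠ ⊥ ∧ x ≠ ⊤) ∧ c.image P.rk = S.image (· + 1)} := by
    rintro ⟨⟨F, hF⟩, ⟨c', hch, hmem, himg⟩⟩
    refine ⟨insert F c', ?_, ?_, ?_⟩
    · rw [Finset.coe_insert]
      exact hch.insert fun b hb _ => Or.inr (hmem b hb).1
    · intro x hx
      rcases Finset.mem_insert.1 hx with rfl | hx
      · constructor
        · intro hxb; have := hbotrk x hxb; omega
        · intro hxt; have := htoprk x hxt; omega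
      · have h1 := hrkb F c' himg x hx
        constructor
        · intro hxb; have := hbotrk x hxb; omega
        · intro hxt; have := htoprk x hxt; omega
    · rw [Finset.image_insert, hF, himg]
      conv_rhs => rw [← Finset.insert_erase ht]
      rw [Finset.image_insert]
  have hginj : Function.Injective g := by
    rintro ⟨⟨F, hF⟩, ⟨c', hch, hmem, himg⟩⟩ ⟨⟨G, hG⟩, ⟨c'', hch', hmem', himg'⟩⟩ hgeq
    have heq : insert F c' = insert G c'' := congrArg Subtype.val hgeq
    have hFc' : F ∉ c' := fun h => by have := hrkb F c' himg F h; omega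
    have hGc'' : G ∉ c'' := fun h => by have := hrkb G c'' himg' G h; omega
    have hFG : G = F := by
      have : G ∈ insert F c' := heq ▸ Finset.mem_insert_self G c''
      rcases Finset.mem_insert.1 this with h | h
      · exact h
      · exfalso; have := hrkb F c' himg G h; omega
    subst hFG
    have hcc : c' = c'' := by
      have h1 : (insert G c').erase G = c' := Finset.erase_insert hFc'
      have h2 : (insert G c'').erase G = c'' := Finset.erase_insert hGc''
      rw [← h1, heq, h2]
    subst hcc
    rfl
  have hgsurj : Function.Surjective g := by
    rintro ⟨c, hchain, hmem, himg⟩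
    have htc : t + 1 ∈ c.image P.rk := by
      rw [himg]; exact Finset.mem_image.2 ⟨t, ht, rfl⟩
    obtain ⟨F, hFc, hFrk⟩ := Finset.mem_image.1 htc
    have hrkle : ∀ x ∈ c, P.rk x ≤ t + 1 ∧ 1 ≤ P.rk x := by
      intro x hx
      have : P.rk x ∈ S.image (· + 1) := himg ▸ Finset.mem_image_of_mem _ hx
      obtain ⟨s, hs, hsx⟩ := Finset.mem_image.1 this
      have := htmax s hs
      omega
    have hmax : ∀ x ∈ c, x ≤ F := by
      intro x hx
      rcases eq_or_ne x F with rfl | hne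
      · exact le_refl x
      · rcases hchain (Finset.mem_coe.2 hx) (Finset.mem_coe.2 hFc) hne with h' | h'
        · exact h'
        · exfalso
          have := P.rk_strictMono F x (h'.lt_of_ne (Ne.symm hne))
          have := (hrkle x hx).1
          omega
    have himg' : (c.erase F).image P.rk = (S.erase t).image (· + 1) := by
      have h1 : (c.erase F).image P.rk = (c.image P.rk).erase (P.rk F) := by
        ext y
        simp only [Finset.mem_image, Finset.mem_erase]
        constructor
        · rintro ⟨x, ⟨hxne, hxc⟩, rfl⟩
          exact ⟨fun h => hxne (chain_rk_inj P hchain hxc hFc h), ⟨x, hxc, rfl⟩⟩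
        · rintro ⟨hy, x, hx, rfl⟩
          exact ⟨x, ⟨fun h => hy (by rw [h]), hx⟩, rfl⟩
      rw [h1, hFrk, himg, ← Finset.image_erase (add_left_injective 1)]
    refine ⟨⟨⟨F, hFrk⟩, ⟨c.erase F, ?_, ?_, himg'⟩⟩, ?_⟩
    · exact hchain.mono (by simpa using Finset.erase_subset F c)
    · intro x hx
      refine ⟨hmax x (Finset.mem_of_mem_erase hx), fun hxb => ?_⟩
      have h1 := (hrkle x (Finset.mem_of_mem_erase hx)).2
      have := hbotrk x hxb
      omega
    · apply Subtype.ext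
      show insert F (c.erase F) = c
      exact Finset.insert_erase hFc
  have hequiv := Equiv.ofBijective g ⟨hginj, hgsurj⟩
  rw [flagNum, ← Nat.card_congr hequiv]
  haveI : ∀ F : {F : P.carrier // P.rk F = t + 1}, Fintype
      {c' : Finset P.carrier // IsChain (· ≤ ·) (c' : Set P.carrier) ∧
        (∀ x ∈ c', x ≤ F.1 ∧ x ≠ ⊥) ∧ c'.image P.rk = (S.erase t).image (· + 1)} :=
    fun F => Fintype.ofFinite _
  rw [Nat.card_eq_fintype_card, Fintype.card_sigma]
  apply Finset.sum_congr rfl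
  intro F _
  rw [flagBelow, Nat.card_eq_fintype_card]
/-- Theorem (flag numbers of multiplicial polytopes): if `P` is a multiplicial
`d`-polytope and `S ⊆ {0,…,d-1}` has maximum element `t` and at least two elements,
then `f_S(P) = a f_t(P) + b f_{0,t}(P)` with the explicit coefficients
`a = C(t+1; s₁+1,…,sᵣ-s_{r-1}) [1 - (1/(t(t-1))) ∑_{j<r} (s_j+1)(s_{j+1}-s_j)(s_{j+1}-1)]`
and `b = C(t+1; s₁+1,…,sᵣ-s_{r-1}) (1/((t+1)t(t-1))) ∑_{j<r} (s_j+1)(s_{j+1}-s_j)(s_{j+1}-1)`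
(here encoded via `multinom t (S.erase t)` and `pairSum t (S.erase t)`). -/
theorem multiplicial_flag_linear {d : ℕ} (hd : 2 ≤ d) (P : GradedLattice d)
    (hM : Multiplicial P) (S : Finset ℕ) (hSd : S ⊆ Finset.range d)
    (t : ℕ) (ht : t ∈ S) (htmax : ∀ s ∈ S, s ≤ t) (hr : 2 ≤ S.card) :
    (flagNum P S : ℚ)
      = multinom t (S.erase t) *
            (1 - (pairSum t (S.erase t) : ℚ) / ((t : ℚ) * ((t : ℚ) - 1))) *
          (flagNum P {t} : ℚ)
        + multinom t (S.erase t) *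
            ((pairSum t (S.erase t) : ℚ) / (((t : ℚ) + 1) * (t : ℚ) * ((t : ℚ) - 1))) *
          (flagNum P ({0, t} : Finset ℕ) : ℚ) := by
  classical
  have htd : t < d := Finset.mem_range.1 (hSd ht)
  have ht1 : 1 ≤ t := by
    obtain ⟨s, hs, hsne⟩ := Finset.exists_mem_ne (s := S) (by omega) t
    have := htmax s hs
    omega
  set M : ℚ := multinom t (S.erase t) with hM'
  set p : ℚ := (pairSum t (S.erase t) : ℚ) with hp'
  -- pointwise algebraic identity
  have key : ∀ x : ℚ, M * (1 + ((x - 1 - (t : ℚ)) / (((t : ℚ) + 1) * (t : ℚ) * ((t : ℚ) - 1))) * p)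
      = M * (1 - p / ((t : ℚ) * ((t : ℚ) - 1))) * 1
        + M * (p / (((t : ℚ) + 1) * (t : ℚ) * ((t : ℚ) - 1))) * x := by
    intro x
    have h : ((t : ℚ) + 1) ≠ 0 := by positivity
    have h1 : (((t : ℚ) + 1) * p) / (((t : ℚ) + 1) * ((t : ℚ) * ((t : ℚ) - 1)))
        = p / ((t : ℚ) * ((t : ℚ) - 1)) := mul_div_mul_left _ _ h
    linear_combination (-M) * h1
  -- splitting the three flag numbers
  have hsplitS := flag_split P S t ht htmax htd
  have hsplitT : flagNum P {t} = ∑ F : {F : P.carrier // P.rk F = t + 1}, 1 := by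
    rw [flag_split P {t} t (Finset.mem_singleton_self t) (by simp) htd]
    apply Finset.sum_congr rfl
    intro F _
    rw [Finset.erase_singleton, flagBelow_empty]
  have hsplit0T : flagNum P ({0, t} : Finset ℕ)
      = ∑ F : {F : P.carrier // P.rk F = t + 1}, flagBelow P F.1 {0} := by
    rw [flag_split P {0, t} t (by simp) (by intro s hs; simp at hs; omega) htd]
    apply Finset.sum_congr rfl
    intro F _
    congr 1
    ext y
    simp only [Finset.mem_erase, Finset.mem_insert, Finset.mem_singleton]
    omega
  -- the multiplicial formula for each face
  have hface : ∀ F : {F : P.carrier // P.rk F = t + 1},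
      (flagBelow P F.1 (S.erase t) : ℚ)
        = M * (1 + (((flagBelow P F.1 {0} : ℚ) - 1 - (t : ℚ))
            / (((t : ℚ) + 1) * (t : ℚ) * ((t : ℚ) - 1))) * p) := by
    rintro ⟨F, hF⟩
    have hFb : F ≠ ⊥ := by
      intro h; rw [h, P.rk_bot] at hF; omega
    have hFt : F ≠ ⊤ := by
      intro h; rw [h, P.rk_top] at hF; omega
    have hrk1 : P.rk F - 1 = t := by omega
    have hsub : S.erase t ⊆ Finset.range (P.rk F - 1) := by
      intro s hs
      rw [Finset.mem_range, hrk1]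
      have h1 := Finset.mem_erase.1 hs
      have := htmax s h1.2
      omega
    have := hM F hFb hFt (S.erase t) hsub
    rw [hrk1] at this
    rw [this, multiplexFlag]
    have hv1 : 1 ≤ flagBelow P F {0} := one_le_flagBelow_zero P F hFb
    rw [Nat.cast_sub hv1, Nat.cast_one]
  -- put everything together
  rw [hsplitS, hsplitT, hsplit0T]
  push_cast
  rw [Finset.mul_sum, Finset.mul_sum, ← Finset.sum_add_distrib]
  apply Finset.sum_congr rfl
  intro F _
  rw [hface F]
  exact key _
end

section
/- Fix $d\ge 2$. The linear span of the flag vectors $(f_S(P))_{S\subseteq\{0,\ldots,d-1\}}$ of all multiplicial $d$-polytopes $P$ has dimension at most $d$; more precisely, every flag number $f_S$ of a multiplicial $d$-polytope is a fixed (depending only on $S$ and $d$) rational linear combination of $1, f_0, f_1,\ldots, f_{d-2}$. -/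
/-!
Chains are counted by their top face: if `m > max S` then `f_{S ∪ {m}}` is the sum, over the
faces `F` of rank `m + 1`, of the flag numbers `f_S` of `[⊥, F]`. In a multiplicial lattice each
summand is an affine function of the number of vertices of `F`, so `f_{S ∪ {m}}` is a fixed
combination of `f_m` and `f_{0,m}`. Euler's relation expresses `f_{d-1}` through
`1, f_0, …, f_{d-2}`. The Dehn–Sommerville relation for the faces of dimension `m - 1` expresses
`f_{m-1,m}` through `f_{m-1}` and the `f_{m-1,j}` with `j > m`; since a multiplex has as many
facets as vertices, `f_{m-1,m} = f_{0,m}`, and descending induction on `m` puts every `f_{0,m}`,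
hence every `f_S`, in the span of `1, f_0, …, f_{d-2}`.
-/

open Finset

lemma multiplexFlag_eq_add_mul (k n : ℕ) (S : Finset ℕ) :
    multiplexFlag k n S =
      multiplexFlag k 0 S + n * (multiplexFlag k 1 S - multiplexFlag k 0 S) := by
  simp only [multiplexFlag, Nat.cast_zero, Nat.cast_one, div_eq_mul_inv]
  ring

lemma multiplexFlag_succ_singleton_self {i : ℕ} (hi : 1 ≤ i) (n : ℕ) :
    multiplexFlag (i + 1) n {i} = n + 1 := by
  have hparts : multiParts (i + 1) {i} = [(i : ℤ) + 1, 1] := by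
    simp [multiParts, sortedList]
  have hpair : pairSum (i + 1) {i} = ((i : ℤ) + 1) * i := by
    simp [pairSum, sortedList]
  have hmultinom : multinom (i + 1) {i} = i + 2 := by
    rw [multinom, hparts]
    have : ((i : ℤ) + 1).toNat = i + 1 := by omega
    simp only [List.map_cons, List.map_nil, List.prod_cons, List.prod_nil, this, Int.toNat_one,
      Nat.factorial_one, Nat.cast_one, mul_one, Nat.factorial_succ (i + 1)]
    field_simp
    push_cast
    ring
  have : (i : ℚ) ≠ 0 := by positivity
  rw [multiplexFlag, hmultinom, hpair, Nat.cast_succ, add_sub_cancel_right]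
  push_cast
  field_simp
  ring

lemma rank_span_le_of_forall_eq_add_sum {R M : Type*} [Ring R] [StrongRankCondition R]
    [AddCommGroup M] [Module R M] {V : Set M} (a : M) (c : ℕ → M) (n : ℕ)
    (h : ∀ v ∈ V, ∃ t : ℕ → R, v = a + ∑ i ∈ range n, t i • c i) :
    Module.rank R (Submodule.span R V) ≤ n + 1 := by
  classical
  have hV : V ⊆ Submodule.span R ((insert a ((range n).image c) : Finset M) : Set M) := by
    rintro v hv
    obtain ⟨t, rfl⟩ := h v hv
    exact add_mem (Submodule.subset_span (mem_insert_self _ _)) (sum_mem fun i hi =>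
      Submodule.smul_mem _ _ (Submodule.subset_span (mem_insert_of_mem (mem_image_of_mem c hi))))
  calc Module.rank R (Submodule.span R V)
      ≤ #(insert a ((range n).image c)) :=
        (Submodule.rank_mono (Submodule.span_le.2 hV)).trans (rank_span_finset_le _)
    _ ≤ n + 1 := by
        exact_mod_cast (card_insert_le _ _).trans
          (Nat.succ_le_succ (card_image_le.trans (card_range n).le))

namespace GradedLattice

open scoped Classical

variable {d : ℕ} (P : GradedLattice d)

noncomputable def ofRank (r : ℕ) : Finset P.carrier := {x | P.rk x = r}

noncomputable def chains (S : Finset ℕ) : Finset (Finset P.carrier) :=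
  {c | IsChain (· ≤ ·) (c : Set P.carrier) ∧ (∀ x ∈ c, x ≠ ⊥ ∧ x ≠ ⊤) ∧
    c.image P.rk = S.image (· + 1)}

noncomputable def chainsBelow (F : P.carrier) (S : Finset ℕ) : Finset (Finset P.carrier) :=
  {c | IsChain (· ≤ ·) (c : Set P.carrier) ∧ (∀ x ∈ c, x ≤ F ∧ x ≠ ⊥) ∧
    c.image P.rk = S.image (· + 1)}

variable {P}

@[simp] lemma mem_ofRank {r : ℕ} {x : P.carrier} : x ∈ P.ofRank r ↔ P.rk x = r := by
  simp [ofRank]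

lemma filter_rk_eq (r : ℕ) : ({x | P.rk x = r} : Finset P.carrier) = P.ofRank r := rfl

lemma mem_chains {S : Finset ℕ} {c : Finset P.carrier} :
    c ∈ P.chains S ↔ IsChain (· ≤ ·) (c : Set P.carrier) ∧ (∀ x ∈ c, x ≠ ⊥ ∧ x ≠ ⊤) ∧
      c.image P.rk = S.image (· + 1) := by
  simp [chains]

lemma mem_chainsBelow {F : P.carrier} {S : Finset ℕ} {c : Finset P.carrier} :
    c ∈ P.chainsBelow F S ↔ IsChain (· ≤ ·) (c : Set P.carrier) ∧ (∀ x ∈ c, x ≤ F ∧ x ≠ ⊥) ∧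
      c.image P.rk = S.image (· + 1) := by
  simp [chainsBelow]

lemma rk_lt {x y : P.carrier} (h : x < y) : P.rk x < P.rk y := P.rk_strictMono x y h

lemma rk_le_rk {x y : P.carrier} (h : x ≤ y) : P.rk x ≤ P.rk y := by
  rcases h.eq_or_lt with rfl | h
  exacts [le_rfl, (rk_lt h).le]

lemma eq_of_le_of_rk_le {x y : P.carrier} (h : x ≤ y) (hr : P.rk y ≤ P.rk x) : x = y :=
  by_contra fun hne => (rk_lt (h.lt_of_ne hne)).not_ge hr

lemma rk_le (x : P.carrier) : P.rk x ≤ d + 1 := P.rk_top ▸ rk_le_rk le_top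

lemma rk_eq_zero_iff {x : P.carrier} : P.rk x = 0 ↔ x = ⊥ := by
  refine ⟨fun h => ?_, fun h => h ▸ P.rk_bot⟩
  exact (eq_of_le_of_rk_le bot_le (by rw [h, P.rk_bot])).symm

lemma rk_eq_top_iff {x : P.carrier} : P.rk x = d + 1 ↔ x = ⊤ := by
  refine ⟨fun h => ?_, fun h => h ▸ P.rk_top⟩
  exact eq_of_le_of_rk_le le_top (by rw [h, P.rk_top])

lemma ne_bot_of_rk_eq_succ {x : P.carrier} {r : ℕ} (h : P.rk x = r + 1) : x ≠ ⊥ :=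
  fun hx => by rw [hx, P.rk_bot] at h; omega

lemma ne_top_of_rk_le {x : P.carrier} (h : P.rk x ≤ d) : x ≠ ⊤ :=
  fun hx => by rw [hx, P.rk_top] at h; omega

lemma ofRank_zero : P.ofRank 0 = {⊥} := by
  ext; simp [rk_eq_zero_iff]

lemma ofRank_top : P.ofRank (d + 1) = {⊤} := by
  ext; simp [rk_eq_top_iff]

lemma rk_injOn {c : Set P.carrier} (hc : IsChain (· ≤ ·) c) : Set.InjOn P.rk c := by
  intro x hx y hy hxy
  rcases hc.total hx hy with h | h
  exacts [eq_of_le_of_rk_le h hxy.ge, (eq_of_le_of_rk_le h hxy.le).symm]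

variable (P)

lemma flagNum_eq_card_chains (S : Finset ℕ) : flagNum P S = #(P.chains S) := by
  rw [flagNum, Nat.card_eq_fintype_card, Fintype.card_subtype, chains]

lemma flagBelow_eq_card_chainsBelow (F : P.carrier) (S : Finset ℕ) :
    flagBelow P F S = #(P.chainsBelow F S) := by
  rw [flagBelow, Nat.card_eq_fintype_card, Fintype.card_subtype, chainsBelow]

lemma flagNum_empty : flagNum P ∅ = 1 := by
  rw [flagNum_eq_card_chains, card_eq_one]
  refine ⟨∅, eq_singleton_iff_unique_mem.2 ⟨by simp [chains, IsChain], fun c hc => ?_⟩⟩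
  simpa using (mem_chains.1 hc).2.2

lemma flagBelow_empty (F : P.carrier) : flagBelow P F ∅ = 1 := by
  rw [flagBelow_eq_card_chainsBelow, card_eq_one]
  refine ⟨∅, eq_singleton_iff_unique_mem.2 ⟨by simp [chainsBelow, IsChain], fun c hc => ?_⟩⟩
  simpa using (mem_chainsBelow.1 hc).2.2

lemma flagBelow_singleton (F : P.carrier) (i : ℕ) :
    flagBelow P F {i} = #{x ∈ P.ofRank (i + 1) | x ≤ F} := by
  rw [flagBelow_eq_card_chainsBelow, eq_comm, ← card_map ⟨singleton, singleton_injective⟩]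
  congr 1
  ext c
  simp only [mem_chainsBelow, mem_filter, mem_map, mem_ofRank,
    Function.Embedding.coeFn_mk, image_singleton]
  constructor
  · rintro ⟨x, ⟨hx, hxF⟩, rfl⟩
    refine ⟨Set.Subsingleton.isChain (by simp), fun y hy => ?_, by simp [hx]⟩
    rw [mem_singleton.1 hy]
    exact ⟨hxF, ne_bot_of_rk_eq_succ hx⟩
  · rintro ⟨hc, hle, himg⟩
    have hcard : #c = 1 := by rw [← card_image_of_injOn (rk_injOn hc), himg, card_singleton]
    obtain ⟨x, rfl⟩ := card_eq_one.1 hcard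
    exact ⟨x, ⟨by simpa using himg, (hle x (mem_singleton_self x)).1⟩, rfl⟩

lemma flagNum_eq_zero_of_not_subset {S : Finset ℕ} (hS : ¬ S ⊆ range d) :
    flagNum P S = 0 := by
  rw [flagNum_eq_card_chains, card_eq_zero, eq_empty_iff_forall_notMem]
  intro c hmem
  obtain ⟨-, hc, himg⟩ := mem_chains.1 hmem
  obtain ⟨s, hs, hsd⟩ := not_subset.1 hS
  obtain ⟨x, hx, hxs⟩ := mem_image.1 (himg ▸ mem_image_of_mem (· + 1) hs)
  have := (rk_le x).lt_of_ne (mt rk_eq_top_iff.1 (hc x hx).2)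
  simp only [mem_range] at hsd
  omega

section Decomposition

variable {P} {m : ℕ} {S : Finset ℕ}

lemma le_of_mem_chains_insert (hS : S ⊆ range m) {c : Finset P.carrier} {F x : P.carrier}
    (hc : c ∈ P.chains (insert m S)) (hF : F ∈ c) (hFr : P.rk F = m + 1) (hx : x ∈ c) :
    x ≤ F := by
  obtain ⟨hchain, -, himg⟩ := mem_chains.1 hc
  rcases hchain.total hF hx with h | h
  · obtain ⟨s, hs, hxs⟩ := mem_image.1 (himg ▸ mem_image_of_mem P.rk hx)
    have : s ≤ m := by
      rcases mem_insert.1 hs with rfl | hs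
      exacts [le_rfl, (mem_range.1 (hS hs)).le]
    exact (eq_of_le_of_rk_le h (by omega)).ge
  · exact h

lemma erase_mem_chainsBelow (hS : S ⊆ range m) {c : Finset P.carrier} {F : P.carrier}
    (hc : c ∈ P.chains (insert m S)) (hF : F ∈ c) (hFr : P.rk F = m + 1) :
    c.erase F ∈ P.chainsBelow F S := by
  obtain ⟨hchain, hne, himg⟩ := mem_chains.1 hc
  have hmS : m ∉ S := fun h => by simpa using hS h
  refine mem_chainsBelow.2 ⟨hchain.mono (by simp), fun x hx => ?_, ?_⟩
  · exact ⟨le_of_mem_chains_insert hS hc hF hFr (mem_of_mem_erase hx),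
      (hne x (mem_of_mem_erase hx)).1⟩
  · rw [← sdiff_singleton_eq_erase, image_sdiff_of_injOn (rk_injOn hchain) (by simpa using hF),
      himg, image_singleton, hFr, image_insert, sdiff_singleton_eq_erase, erase_insert]
    simpa using hmS

lemma insert_mem_chains (hm : m < d) {c : Finset P.carrier}
    {F : P.carrier} (hc : c ∈ P.chainsBelow F S) (hFr : P.rk F = m + 1) :
    insert F c ∈ P.chains (insert m S) := by
  obtain ⟨hchain, hle, himg⟩ := mem_chainsBelow.1 hc
  have hFtop : F ≠ ⊤ := ne_top_of_rk_le (by omega)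
  refine mem_chains.2 ⟨?_, fun x hx => ?_, by rw [image_insert, himg, hFr, image_insert]⟩
  · rw [coe_insert]
    exact hchain.insert fun b hb _ => Or.inr (hle b hb).1
  · rcases mem_insert.1 hx with rfl | hx
    · exact ⟨ne_bot_of_rk_eq_succ hFr, hFtop⟩
    · exact ⟨(hle x hx).2, fun h => hFtop (top_le_iff.1 (h ▸ (hle x hx).1))⟩

lemma notMem_of_mem_chainsBelow (hS : S ⊆ range m) {c : Finset P.carrier} {F : P.carrier}
    (hc : c ∈ P.chainsBelow F S) (hFr : P.rk F = m + 1) : F ∉ c := by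
  intro hF
  obtain ⟨s, hs, hFs⟩ := mem_image.1 ((mem_chainsBelow.1 hc).2.2 ▸ mem_image_of_mem P.rk hF)
  have := mem_range.1 (hS hs)
  omega

lemma card_filter_mem_chains_insert (hm : m < d) (hS : S ⊆ range m) {F : P.carrier}
    (hFr : P.rk F = m + 1) :
    #{c ∈ P.chains (insert m S) | F ∈ c} = #(P.chainsBelow F S) := by
  refine card_nbij' (·.erase F) (insert F) (fun c hc => ?_) (fun c hc => ?_)
    (fun c hc => ?_) (fun c hc => ?_)
  · obtain ⟨hc, hF⟩ := mem_filter.1 (mem_coe.1 hc)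
    exact erase_mem_chainsBelow hS hc hF hFr
  · exact mem_filter.2 ⟨insert_mem_chains hm hc hFr, mem_insert_self F c⟩
  · exact insert_erase (mem_filter.1 (mem_coe.1 hc)).2
  · exact erase_insert (notMem_of_mem_chainsBelow hS hc hFr)

variable (P)

theorem flagNum_insert (hm : m < d) (hS : S ⊆ range m) :
    flagNum P (insert m S) = ∑ F ∈ P.ofRank (m + 1), flagBelow P F S := by
  have hunique : ∀ c ∈ P.chains (insert m S), #{F ∈ P.ofRank (m + 1) | F ∈ c} = 1 := by
    intro c hc
    obtain ⟨hchain, -, himg⟩ := mem_chains.1 hc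
    obtain ⟨F, hF, hFr⟩ :=
      mem_image.1 (himg.symm ▸ mem_image_of_mem (· + 1) (mem_insert_self m S))
    refine card_eq_one.2 ⟨F, eq_singleton_iff_unique_mem.2 ⟨by simp [hF, hFr], fun G hG => ?_⟩⟩
    obtain ⟨hGr, hG⟩ := mem_filter.1 hG
    exact rk_injOn hchain hG hF (by rw [mem_ofRank.1 hGr, hFr])
  rw [flagNum_eq_card_chains, card_eq_sum_ones, ← sum_congr rfl hunique]
  have := sum_card_bipartiteAbove_eq_sum_card_bipartiteBelow (s := P.ofRank (m + 1))
    (t := P.chains (insert m S)) (r := fun F c => F ∈ c)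
  simp only [bipartiteAbove, bipartiteBelow] at this
  rw [← this]
  refine sum_congr rfl fun F hF => ?_
  rw [flagBelow_eq_card_chainsBelow, card_filter_mem_chains_insert hm hS (mem_ofRank.1 hF)]

theorem flagNum_singleton {k : ℕ} (hk : k < d) : flagNum P {k} = #(P.ofRank (k + 1)) := by
  rw [← insert_empty, flagNum_insert P hk (empty_subset _)]
  simp [flagBelow_empty]

end Decomposition

section Eulerian

lemma sum_eq_bot_add_sum_ofRank_add_top {M : Type*} [AddCommMonoid M] (g : P.carrier → M) :
    ∑ z, g z = g ⊥ + ∑ j ∈ range d, ∑ z ∈ P.ofRank (j + 1), g z + g ⊤ := by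
  rw [← sum_fiberwise_of_maps_to (g := P.rk) (t := range (d + 2))
    (fun z _ => mem_range.2 (Nat.lt_succ_of_le (rk_le z))), sum_range_succ, sum_range_succ']
  simp only [filter_rk_eq, ofRank_zero, ofRank_top, sum_singleton]
  abel

variable {P}

lemma sum_neg_one_pow_rk_of_le (hE : Eulerian P) {x : P.carrier} (hx : x ≠ ⊤) :
    ∑ z, (if x ≤ z then (-1 : ℚ) ^ P.rk z else 0) = 0 := by
  have := hE x ⊤ (lt_top_iff_ne_top.2 hx)
  simp only [le_top, and_true] at this
  exact_mod_cast this

theorem euler_relation (hE : Eulerian P) :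
    1 + ∑ j ∈ range d, (-1 : ℚ) ^ (j + 1) * flagNum P {j} + (-1) ^ (d + 1) = 0 := by
  have := sum_neg_one_pow_rk_of_le hE (ne_top_of_rk_le (by rw [P.rk_bot]; omega))
  simp only [bot_le, if_true] at this
  rw [sum_eq_bot_add_sum_ofRank_add_top, P.rk_bot, P.rk_top, pow_zero] at this
  rw [← this]
  congr 2
  refine sum_congr rfl fun j hj => ?_
  rw [flagNum_singleton P (mem_range.1 hj), sum_congr rfl fun z hz => by rw [mem_ofRank.1 hz]]
  simp [mul_comm]

lemma card_filter_le_eq_zero {i : ℕ} {z : P.carrier} (hz : P.rk z < i + 1) :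
    #{x ∈ P.ofRank (i + 1) | x ≤ z} = 0 :=
  card_eq_zero.2 <| filter_eq_empty_iff.2 fun x hx hxz => by
    have := rk_le_rk hxz
    rw [mem_ofRank.1 hx] at this
    omega

variable (P) in
lemma sum_card_filter_le {i j : ℕ} (hij : i ≤ j) (hj : j < d) :
    ∑ z ∈ P.ofRank (j + 1), #{x ∈ P.ofRank (i + 1) | x ≤ z} = flagNum P (insert j {i}) := by
  rcases hij.eq_or_lt with rfl | hij
  · rw [insert_eq_self.2 (mem_singleton_self i), flagNum_singleton P hj, card_eq_sum_ones]
    refine sum_congr rfl fun z hz => card_eq_one.2 ⟨z, eq_singleton_iff_unique_mem.2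
      ⟨mem_filter.2 ⟨hz, le_rfl⟩, fun x hx => ?_⟩⟩
    obtain ⟨hx, hxz⟩ := mem_filter.1 hx
    exact eq_of_le_of_rk_le hxz (by rw [mem_ofRank.1 hx, mem_ofRank.1 hz])
  · rw [flagNum_insert P hj (by simpa using hij)]
    exact sum_congr rfl fun z _ => (flagBelow_singleton P z i).symm

/-- The relation `∑_{k=t}^{d-1} (-1)^{k-t} f_{t-1,k} = (1 - (-1)^{d-t}) f_{t-1}` for `t = i + 1`,
multiplied by `(-1)^(t+1)`; the term `j = i` is `f_i`, since `insert i {i} = {i}`. -/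
theorem dehn_sommerville (hE : Eulerian P) {i : ℕ} (hi : i < d) :
    ∑ j ∈ Ico i d, (-1 : ℚ) ^ (j + 1) * flagNum P (insert j {i})
      + (-1) ^ (d + 1) * flagNum P {i} = 0 := by
  have hsum : ∑ z, (-1 : ℚ) ^ P.rk z * #{x ∈ P.ofRank (i + 1) | x ≤ z} = 0 := by
    simp_rw [natCast_card_filter, mul_sum, mul_ite, mul_one, mul_zero]
    rw [sum_comm]
    exact sum_eq_zero fun x hx =>
      sum_neg_one_pow_rk_of_le hE (ne_top_of_rk_le (by rw [mem_ofRank.1 hx]; omega))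
  rw [sum_eq_bot_add_sum_ofRank_add_top, card_filter_le_eq_zero (by rw [P.rk_bot]; omega),
    filter_true_of_mem fun _ _ => le_top, ← flagNum_singleton P hi, P.rk_top,
    ← sum_range_add_sum_Ico _ hi.le] at hsum
  have hlow : ∑ j ∈ range i, ∑ z ∈ P.ofRank (j + 1),
      (-1 : ℚ) ^ P.rk z * #{x ∈ P.ofRank (i + 1) | x ≤ z} = 0 :=
    sum_eq_zero fun j hj => sum_eq_zero fun z hz => by
      rw [card_filter_le_eq_zero (by rw [mem_ofRank.1 hz]; simpa using hj), Nat.cast_zero,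
        mul_zero]
  rw [hlow, Nat.cast_zero, mul_zero, zero_add, zero_add] at hsum
  rw [← hsum]
  congr 1
  refine sum_congr rfl fun j hj => ?_
  obtain ⟨hij, hj⟩ := mem_Ico.1 hj
  rw [← sum_card_filter_le P hij hj, Nat.cast_sum, mul_sum]
  exact sum_congr rfl fun z hz => by rw [mem_ofRank.1 hz]

end Eulerian

variable {P}

section Multiplicial

lemma one_le_flagBelow_zero {F : P.carrier} (hF : F ≠ ⊥) : 1 ≤ flagBelow P F {0} := by
  obtain ⟨a, ha, haF⟩ := (eq_bot_or_exists_atom_le F).resolve_left hF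
  have hrk : P.rk a = 1 := by simpa [P.rk_bot] using P.rk_cover ⊥ a ha.bot_covBy
  rw [flagBelow_singleton, Nat.one_le_iff_ne_zero, ← pos_iff_ne_zero, card_pos]
  exact ⟨a, mem_filter.2 ⟨mem_ofRank.2 hrk, haF⟩⟩

variable {m : ℕ} {S : Finset ℕ}

lemma flagNum_insert_eq_sum_multiplexFlag (hM : Multiplicial P) (hm : m < d)
    (hS : S ⊆ range m) :
    (flagNum P (insert m S) : ℚ) =
      ∑ F ∈ P.ofRank (m + 1), multiplexFlag m (flagBelow P F {0} - 1) S := by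
  rw [flagNum_insert P hm hS, Nat.cast_sum]
  refine sum_congr rfl fun F hF => ?_
  have hFr := mem_ofRank.1 hF
  have hM := hM F (ne_bot_of_rk_eq_succ hFr) (ne_top_of_rk_le (by omega)) S
    (by rwa [hFr, Nat.add_sub_cancel])
  rwa [hFr, Nat.add_sub_cancel] at hM

theorem flagNum_insert_eq_of_multiplicial (hM : Multiplicial P) (hm0 : 0 < m) (hm : m < d)
    (hS : S ⊆ range m) :
    (flagNum P (insert m S) : ℚ) =
      (2 * multiplexFlag m 0 S - multiplexFlag m 1 S) * flagNum P {m}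
        + (multiplexFlag m 1 S - multiplexFlag m 0 S) * flagNum P (insert m {0}) := by
  rw [flagNum_insert_eq_sum_multiplexFlag hM hm hS, flagNum_insert P hm (by simpa using hm0),
    flagNum_singleton P hm, card_eq_sum_ones, Nat.cast_sum, Nat.cast_sum, mul_sum, mul_sum,
    ← sum_add_distrib]
  refine sum_congr rfl fun F hF => ?_
  have hvert := one_le_flagBelow_zero (ne_bot_of_rk_eq_succ (mem_ofRank.1 hF))
  rw [multiplexFlag_eq_add_mul, Nat.cast_sub hvert]
  push_cast
  ring

theorem flagNum_insert_succ_self_eq_insert_zero (hM : Multiplicial P) {i : ℕ}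
    (hi : i + 1 < d) :
    flagNum P (insert (i + 1) {i}) = flagNum P (insert (i + 1) {0}) := by
  rcases Nat.eq_zero_or_pos i with rfl | hi0
  · rfl
  have hfacets := flagNum_insert_eq_sum_multiplexFlag hM hi (S := {i}) (by simp)
  rw [← Nat.cast_inj (R := ℚ), hfacets, flagNum_insert P hi (by simp), Nat.cast_sum]
  refine sum_congr rfl fun F hF => ?_
  rw [multiplexFlag_succ_singleton_self hi0, Nat.cast_sub (one_le_flagBelow_zero
    (ne_bot_of_rk_eq_succ (mem_ofRank.1 hF))), Nat.cast_one, sub_add_cancel]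

end Multiplicial

noncomputable def flagFn (d : ℕ) (S : Finset ℕ) : GradedLattice d → ℚ := fun P => flagNum P S

def lowFlagSpan (d : ℕ) : Submodule ℚ (GradedLattice d → ℚ) where
  carrier := {φ | ∃ (a : ℚ) (c : ℕ → ℚ), ∀ P : GradedLattice d, Eulerian P → Multiplicial P →
    φ P = a + ∑ i ∈ range (d - 1), c i * flagNum P {i}}
  add_mem' := by
    rintro φ ψ ⟨a, c, hφ⟩ ⟨b, e, hψ⟩
    refine ⟨a + b, c + e, fun P hE hM => ?_⟩
    simp only [Pi.add_apply, hφ P hE hM, hψ P hE hM, add_mul, sum_add_distrib]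
    ring
  zero_mem' := ⟨0, 0, by simp⟩
  smul_mem' := by
    rintro r φ ⟨a, c, hφ⟩
    refine ⟨r * a, r • c, fun P hE hM => ?_⟩
    simp only [Pi.smul_apply, smul_eq_mul, hφ P hE hM, mul_add, mul_sum, mul_assoc]

variable {d : ℕ}

lemma mem_lowFlagSpan_of_eqOn {φ ψ : GradedLattice d → ℚ} (hψ : ψ ∈ lowFlagSpan d)
    (h : ∀ P : GradedLattice d, Eulerian P → Multiplicial P → φ P = ψ P) :
    φ ∈ lowFlagSpan d := by
  obtain ⟨a, c, hψ⟩ := hψ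
  exact ⟨a, c, fun P hE hM => (h P hE hM).trans (hψ P hE hM)⟩

lemma one_mem_lowFlagSpan : (1 : GradedLattice d → ℚ) ∈ lowFlagSpan d :=
  ⟨1, 0, by simp⟩

lemma flagFn_singleton_mem_of_lt {k : ℕ} (hk : k < d - 1) : flagFn d {k} ∈ lowFlagSpan d :=
  ⟨0, Pi.single k 1, fun P _ _ => by simp [flagFn, Pi.single_apply, hk]⟩

lemma flagFn_singleton_mem {k : ℕ} (hk : k < d) : flagFn d {k} ∈ lowFlagSpan d := by
  obtain hk | rfl := (Nat.le_sub_one_of_lt hk).lt_or_eq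
  · exact flagFn_singleton_mem_of_lt hk
  obtain ⟨e, rfl⟩ : ∃ e, d = e + 1 := ⟨d - 1, by omega⟩
  -- Euler's relation, solved for `(-1)^(e+1) f_e`.
  refine (Submodule.smul_mem_iff _ (pow_ne_zero (e + 1) (by norm_num : (-1 : ℚ) ≠ 0))).1
    (mem_lowFlagSpan_of_eqOn (ψ := -((1 + (-1) ^ (e + 2)) • 1
      + ∑ j ∈ range e, (-1 : ℚ) ^ (j + 1) • flagFn (e + 1) {j}))
      (neg_mem (add_mem (Submodule.smul_mem _ _ one_mem_lowFlagSpan) (sum_mem fun j hj =>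
        Submodule.smul_mem _ _ (flagFn_singleton_mem_of_lt (by simpa using hj)))))
      fun P hE _ => ?_)
  have := euler_relation hE
  rw [sum_range_succ] at this
  simp only [Pi.smul_apply, Pi.neg_apply, Pi.add_apply, Pi.one_apply, Finset.sum_apply,
    smul_eq_mul, flagFn, Nat.add_sub_cancel]
  linear_combination this

lemma flagFn_insert_mem {m : ℕ} {S : Finset ℕ} (hm0 : 0 < m) (hm : m < d) (hS : S ⊆ range m)
    (h0 : flagFn d (insert m {0}) ∈ lowFlagSpan d) : flagFn d (insert m S) ∈ lowFlagSpan d :=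
  mem_lowFlagSpan_of_eqOn
    (add_mem (Submodule.smul_mem _ (2 * multiplexFlag m 0 S - multiplexFlag m 1 S)
        (flagFn_singleton_mem hm))
      (Submodule.smul_mem _ (multiplexFlag m 1 S - multiplexFlag m 0 S) h0))
    fun _ _ hM => flagNum_insert_eq_of_multiplicial hM hm0 hm hS

theorem flagFn_insert_zero_mem {m : ℕ} (hm0 : 0 < m) (hm : m < d) :
    flagFn d (insert m {0}) ∈ lowFlagSpan d := by
  induction m using Nat.strong_decreasing_induction with
  | base => exact ⟨d, fun m hmd _ hm => absurd hm (by omega)⟩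
  | step m ih =>
    obtain ⟨i, rfl⟩ : ∃ i, m = i + 1 := ⟨m - 1, by omega⟩
    -- Dehn–Sommerville for `i`, solved for its term `(-1)^(i+2) f_{i,i+1} = (-1)^(i+2) f_{0,i+1}`.
    refine (Submodule.smul_mem_iff _ (pow_ne_zero (i + 2) (by norm_num : (-1 : ℚ) ≠ 0))).1
      (mem_lowFlagSpan_of_eqOn (ψ := -(((-1 : ℚ) ^ (i + 1) + (-1) ^ (d + 1)) • flagFn d {i}
        + ∑ j ∈ Ico (i + 2) d, (-1 : ℚ) ^ (j + 1) • flagFn d (insert j {i})))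
        (neg_mem (add_mem (Submodule.smul_mem _ _ (flagFn_singleton_mem (by omega)))
          (sum_mem fun j hj => Submodule.smul_mem _ _ ?_)))
        fun P hE hM => ?_)
    · obtain ⟨hij, hjd⟩ := mem_Ico.1 hj
      exact flagFn_insert_mem (by omega) hjd (by simp; omega) (ih j (by omega) (by omega) hjd)
    · have hDS := dehn_sommerville hE (by omega : i < d)
      rw [sum_eq_sum_Ico_succ_bot (by omega), sum_eq_sum_Ico_succ_bot (by omega),
        insert_eq_self.2 (mem_singleton_self i),
        flagNum_insert_succ_self_eq_insert_zero hM hm] at hDS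
      simp only [Pi.smul_apply, Pi.neg_apply, Pi.add_apply, Finset.sum_apply, smul_eq_mul,
        flagFn]
      linear_combination hDS

theorem flagFn_mem_lowFlagSpan (S : Finset ℕ) : flagFn d S ∈ lowFlagSpan d := by
  by_cases hS : S ⊆ range d
  swap
  · exact mem_lowFlagSpan_of_eqOn (zero_mem _) fun P _ _ => by
      simp [flagFn, flagNum_eq_zero_of_not_subset P hS]
  obtain rfl | hne := S.eq_empty_or_nonempty
  · exact mem_lowFlagSpan_of_eqOn one_mem_lowFlagSpan fun P _ _ => by
      simp [flagFn, flagNum_empty]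
  have hsub : S.erase (S.max' hne) ⊆ range (S.max' hne) := fun s hs =>
    mem_range.2 (S.lt_max'_of_mem_erase_max' hne hs)
  generalize S.max' hne = m, S.max'_mem hne = hmS at hsub
  have hmd : m < d := mem_range.1 (hS hmS)
  rw [← insert_erase hmS]
  obtain rfl | hm0 := Nat.eq_zero_or_pos m
  · rw [range_zero, subset_empty] at hsub
    rw [hsub]
    exact flagFn_singleton_mem hmd
  · exact flagFn_insert_mem hm0 hmd hsub (flagFn_insert_zero_mem hm0 hmd)

end GradedLattice

/-- Every flag number `f_S` of a multiplicial `d`-polytope is a fixed rational linear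
combination (depending only on `S` and `d`) of `1, f_0, …, f_{d-2}`; consequently the
linear span of the flag vectors of all multiplicial `d`-polytopes has dimension at
most `d`. -/
theorem multiplicial_flag_span {d : ℕ} (hd : 2 ≤ d) :
    (∀ S ⊆ Finset.range d, ∃ (a : ℚ) (c : ℕ → ℚ),
      ∀ P : GradedLattice d, Eulerian P → Multiplicial P →
        (flagNum P S : ℚ) = a + ∑ i ∈ Finset.range (d - 1), c i * (flagNum P {i} : ℚ)) ∧
    Module.rank ℚ (Submodule.span ℚ
        {v : Finset ℕ → ℚ | ∃ P : GradedLattice d, Eulerian P ∧ Multiplicial P ∧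
          v = fun S => (flagNum P S : ℚ)})
      ≤ (d : Cardinal) := by
  refine ⟨fun S _ => GradedLattice.flagFn_mem_lowFlagSpan S, ?_⟩
  choose a c hac using fun S => GradedLattice.flagFn_mem_lowFlagSpan (d := d) S
  have hcard : ((d - 1 : ℕ) : Cardinal) + 1 = d := by norm_cast; omega
  rw [← hcard]
  refine rank_span_le_of_forall_eq_add_sum a (fun i S => c S i) (d - 1) ?_
  rintro _ ⟨P, hE, hM, rfl⟩
  refine ⟨fun i => flagNum P {i}, funext fun S => (hac S P hE hM).trans ?_⟩
  simp [Finset.sum_apply, mul_comm]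
end
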